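/- arXiv:2507.07606 — 5 statements merged into one kernel-verified Lean document; each statement's English description precedes it below -/
import Mathlib

section
/- For every a, b ≥ 1, every n ∈ ℕ, and every 2-coloring of the vertices of the (a+b−1)-fractal of dimension n, either there is a vertex-subset order-isomorphic (as a sub-pattern) to the a-fractal of dimension n all of whose vertices have color 0, or there is a vertex-subset order-isomorphic to the b-fractal of dimension n all of whose vertices have color 1. -/
/-!
The `K`-fractal of dimension `n + 1` is the inflation of the increasing (for even `n`) or
decreasing (for odd `n`) pattern on `K` points by `K` copies of the dimension-`n` fractal, and
inflation is monotone under pattern containment. By induction on `n`, each of the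
`K ≥ a + b - 1` blocks contains a colour-0 copy of the `a`-fractal or a colour-1 copy of the
`b`-fractal of dimension `n`. By pigeonhole there are `a` blocks of the first kind or `b` of the
second, and one copy chosen in each of them assembles a copy of the fractal of dimension `n + 1`.
-/

/-- The `k`-fractal of dimension `n`, as a permutation given by its list of values. -/
def kfractal (k : ℕ) : ℕ → List ℕ
  | 0 => [0]
  | n + 1 =>
    if n % 2 = 0 then
      (List.range k).flatMap fun i => (kfractal k n).map (· + i * (kfractal k n).length)
    else
      (List.range k).flatMap fun i => (kfractal k n).map (· + (k - 1 - i) * (kfractal k n).length)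

open Set

theorem add_mul_lt_add_mul_iff_lex {N r r' q q' : ℕ} (hr : r < N) (hr' : r' < N) :
    r + N * q < r' + N * q' ↔ q < q' ∨ q = q' ∧ r < r' := by
  constructor
  · intro h
    rcases lt_trichotomy q q' with hq | rfl | hq
    · exact Or.inl hq
    · exact Or.inr ⟨rfl, by omega⟩
    · have : N * (q' + 1) ≤ N * q := Nat.mul_le_mul_left N hq
      rw [mul_add] at this
      omega
  · rintro (hq | ⟨rfl, h⟩)
    · have : N * (q + 1) ≤ N * q' := Nat.mul_le_mul_left N hq
      rw [mul_add] at this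
      omega
    · omega

theorem finProdFinEquiv_lt_finProdFinEquiv_iff {m N : ℕ} {i i' : Fin m} {j j' : Fin N} :
    finProdFinEquiv (i, j) < finProdFinEquiv (i', j') ↔ i < i' ∨ i = i' ∧ j < j' := by
  rw [Fin.lt_def, finProdFinEquiv_apply_val, finProdFinEquiv_apply_val,
    add_mul_lt_add_mul_iff_lex j.isLt j'.isLt, Fin.lt_def, Fin.lt_def, Fin.val_eq_val]

/-- Patterns are value functions `ℕ → ℕ`, of which only the values on `[0, m)` are read. -/
def IsPatternEmbedding {m M : ℕ} (p q : ℕ → ℕ) (s : Fin m → Fin M) : Prop :=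
  StrictMono s ∧ ∀ x y, q (s x) < q (s y) ↔ p x < p y

def HasCopyIn (p : ℕ → ℕ) (m : ℕ) (q : ℕ → ℕ) (M : ℕ) (R : Set ℕ) : Prop :=
  ∃ s : Fin m → Fin M, IsPatternEmbedding p q s ∧ ∀ x, (s x : ℕ) ∈ R

section Inflation

/-- The inflation `σ[τ]`: position `j + N * i` of block `i` (with `j < N`) gets value
`τ j + N * σ i`. -/
def inflate (σ : ℕ → ℕ) (N : ℕ) (τ : ℕ → ℕ) (m : ℕ) : ℕ :=
  τ (m % N) + N * σ (m / N)

variable {σ σ' τ τ' : ℕ → ℕ} {k K N N' : ℕ}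

theorem inflate_add_mul {i j : ℕ} (hj : j < N) : inflate σ N τ (j + N * i) = τ j + N * σ i := by
  rw [inflate, Nat.add_mul_mod_self_left, Nat.mod_eq_of_lt hj, Nat.add_mul_div_left _ _ (by omega),
    Nat.div_eq_of_lt hj, zero_add]

theorem inflate_finProdFinEquiv (i : Fin k) (j : Fin N) :
    inflate σ N τ (finProdFinEquiv (i, j)) = τ j + N * σ i := by
  rw [finProdFinEquiv_apply_val, inflate_add_mul j.isLt]

theorem inflate_mapsTo (hσ : MapsTo σ (Iio k) (Iio k)) (hτ : MapsTo τ (Iio N) (Iio N)) :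
    MapsTo (inflate σ N τ) (Iio (k * N)) (Iio (k * N)) := by
  intro m hm
  obtain ⟨⟨i, j⟩, hij⟩ := finProdFinEquiv.surjective (⟨m, hm⟩ : Fin (k * N))
  obtain rfl : m = finProdFinEquiv (i, j) := congrArg Fin.val hij.symm
  rw [mem_Iio, inflate_finProdFinEquiv, mul_comm k, ← zero_add (N * k),
    add_mul_lt_add_mul_iff_lex (hτ j.isLt) j.pos]
  exact Or.inl (hσ i.isLt)

def inflateMap (t : Fin k → Fin K) (s : Fin k → Fin N → Fin N') : Fin (k * N) → Fin (K * N') :=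
  finProdFinEquiv ∘ (fun p => (t p.1, s p.1 p.2)) ∘ finProdFinEquiv.symm

@[simp]
theorem inflateMap_finProdFinEquiv (t : Fin k → Fin K) (s : Fin k → Fin N → Fin N')
    (i : Fin k) (j : Fin N) :
    inflateMap t s (finProdFinEquiv (i, j)) = finProdFinEquiv (t i, s i j) := by
  simp [inflateMap]

theorem strictMono_inflateMap {t : Fin k → Fin K} {s : Fin k → Fin N → Fin N'}
    (ht : StrictMono t) (hs : ∀ i, StrictMono (s i)) : StrictMono (inflateMap t s) := by
  intro m m' h
  obtain ⟨⟨i, j⟩, rfl⟩ := finProdFinEquiv.surjective m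
  obtain ⟨⟨i', j'⟩, rfl⟩ := finProdFinEquiv.surjective m'
  simp only [inflateMap_finProdFinEquiv, finProdFinEquiv_lt_finProdFinEquiv_iff] at h ⊢
  rcases h with h | ⟨rfl, h⟩
  · exact Or.inl (ht h)
  · exact Or.inr ⟨rfl, hs i h⟩

theorem IsPatternEmbedding.inflate {t : Fin k → Fin K} {s : Fin k → Fin N → Fin N'}
    (hσ : InjOn σ (Iio k)) (hτ : MapsTo τ (Iio N) (Iio N)) (hτ' : MapsTo τ' (Iio N') (Iio N'))
    (ht : IsPatternEmbedding σ σ' t) (hs : ∀ i, IsPatternEmbedding τ τ' (s i)) :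
    IsPatternEmbedding (inflate σ N τ) (inflate σ' N' τ') (inflateMap t s) := by
  refine ⟨strictMono_inflateMap ht.1 fun i => (hs i).1, fun m m' => ?_⟩
  obtain ⟨⟨i, j⟩, rfl⟩ := finProdFinEquiv.surjective m
  obtain ⟨⟨i', j'⟩, rfl⟩ := finProdFinEquiv.surjective m'
  simp only [inflateMap_finProdFinEquiv, inflate_finProdFinEquiv]
  rw [add_mul_lt_add_mul_iff_lex (hτ' (s i j).isLt) (hτ' (s i' j').isLt),
    add_mul_lt_add_mul_iff_lex (hτ j.isLt) (hτ j'.isLt)]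
  have hblock_eq : σ' (t i) = σ' (t i') ↔ σ i = σ i' := by
    have := ht.2 i i'
    have := ht.2 i' i
    omega
  by_cases hii : i = i'
  · subst hii
    simp [(hs i).2]
  · have hne : σ i ≠ σ i' := fun h => hii (Fin.ext (hσ i.isLt i'.isLt h))
    simp [ht.2, hblock_eq, hne]

end Inflation

section Fractal

/-- The order of the `k` blocks of a fractal of dimension `n + 1`: increasing (a direct sum)
for even `n`, decreasing (a skew sum) for odd `n`. -/
def fractalBlocks (k n i : ℕ) : ℕ :=
  if n % 2 = 0 then i else k - 1 - i

def fractal (k : ℕ) : ℕ → ℕ → ℕ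
  | 0 => fun _ => 0
  | n + 1 => inflate (fractalBlocks k n) (k ^ n) (fractal k n)

variable {k K n : ℕ}

theorem fractalBlocks_mapsTo : MapsTo (fractalBlocks k n) (Iio k) (Iio k) := by
  intro i hi
  simp only [mem_Iio, fractalBlocks] at hi ⊢
  split_ifs <;> omega

theorem fractalBlocks_injOn : InjOn (fractalBlocks k n) (Iio k) := by
  intro i hi i' hi' h
  simp only [mem_Iio, fractalBlocks] at hi hi' h
  split_ifs at h <;> omega

theorem isPatternEmbedding_fractalBlocks {t : Fin k → Fin K} (ht : StrictMono t) :
    IsPatternEmbedding (fractalBlocks k n) (fractalBlocks K n) t := by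
  refine ⟨ht, fun i i' => ?_⟩
  have hlt : (t i : ℕ) < t i' ↔ (i : ℕ) < i' := ht.lt_iff_lt
  have hgt : (t i' : ℕ) < t i ↔ (i' : ℕ) < i := ht.lt_iff_lt
  have hti := (t i).isLt
  have hti' := (t i').isLt
  simp only [fractalBlocks]
  split_ifs <;> omega

theorem fractal_mapsTo : ∀ n, MapsTo (fractal k n) (Iio (k ^ n)) (Iio (k ^ n))
  | 0 => fun _ _ => by simp [fractal]
  | n + 1 => by
    rw [pow_succ']
    exact inflate_mapsTo fractalBlocks_mapsTo (fractal_mapsTo n)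

theorem hasCopyIn_fractal_succ {R : Set ℕ} {T : Finset ℕ} (hT : T ⊆ Finset.range K)
    (hk : k ≤ T.card)
    (h : ∀ i ∈ T, HasCopyIn (fractal k n) (k ^ n) (fractal K n) (K ^ n) ((· + K ^ n * i) ⁻¹' R)) :
    HasCopyIn (fractal k (n + 1)) (k ^ (n + 1)) (fractal K (n + 1)) (K ^ (n + 1)) R := by
  let e := T.orderEmbOfCardLe hk
  have he : ∀ i, e i ∈ T := T.orderEmbOfCardLe_mem hk
  let t : Fin k → Fin K := fun i => ⟨e i, Finset.mem_range.1 (hT (he i))⟩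
  choose s hs hsR using fun i => h (e i) (he i)
  rw [pow_succ', pow_succ']
  refine ⟨inflateMap t s, (isPatternEmbedding_fractalBlocks e.strictMono).inflate
    fractalBlocks_injOn (fractal_mapsTo n) (fractal_mapsTo n) hs, fun m => ?_⟩
  obtain ⟨⟨i, j⟩, rfl⟩ := finProdFinEquiv.surjective m
  simpa using hsR i j

theorem fractal_partition {a b K : ℕ} (hK : a + b - 1 ≤ K) (n : ℕ) (R : Set ℕ) :
    HasCopyIn (fractal a n) (a ^ n) (fractal K n) (K ^ n) R ∨
      HasCopyIn (fractal b n) (b ^ n) (fractal K n) (K ^ n) Rᶜ := by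
  induction n generalizing R with
  | zero =>
    simp only [pow_zero]
    by_cases h0 : 0 ∈ R
    · exact Or.inl
        ⟨fun _ => ⟨0, by simp⟩, ⟨Subsingleton.strictMono _, by simp [fractal]⟩, fun _ => h0⟩
    · exact Or.inr
        ⟨fun _ => ⟨0, by simp⟩, ⟨Subsingleton.strictMono _, by simp [fractal]⟩, fun _ => h0⟩
  | succ n ih =>
    classical
    let S₀ := (Finset.range K).filter fun i =>
      HasCopyIn (fractal a n) (a ^ n) (fractal K n) (K ^ n) ((· + K ^ n * i) ⁻¹' R)
    let S₁ := (Finset.range K).filter fun i =>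
      HasCopyIn (fractal b n) (b ^ n) (fractal K n) (K ^ n) ((· + K ^ n * i) ⁻¹' Rᶜ)
    have hcover : Finset.range K ⊆ S₀ ∪ S₁ := fun i hi => by
      simpa [S₀, S₁, Finset.mem_range.1 hi] using ih ((· + K ^ n * i) ⁻¹' R)
    have hcard : K ≤ S₀.card + S₁.card := by
      simpa using (Finset.card_le_card hcover).trans (Finset.card_union_le _ _)
    by_cases ha : a ≤ S₀.card
    · exact Or.inl <| hasCopyIn_fractal_succ (T := S₀) (Finset.filter_subset _ _) ha
        fun i hi => (Finset.mem_filter.1 hi).2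
    · exact Or.inr <| hasCopyIn_fractal_succ (T := S₁) (Finset.filter_subset _ _) (by omega)
        fun i hi => (Finset.mem_filter.1 hi).2

end Fractal

theorem List.map_range_mul {α : Type*} (k N : ℕ) (f : ℕ → α) :
    (List.range (k * N)).map f =
      (List.range k).flatMap fun i => (List.range N).map fun j => f (j + N * i) := by
  induction k with
  | zero => simp
  | succ k ih =>
    rw [List.range_succ, List.flatMap_append, ← ih, Nat.succ_mul, List.range_add,
      List.map_append, List.map_map]
    simp [Function.comp_def, Nat.add_comm, Nat.mul_comm]

theorem kfractal_eq_map_range (k : ℕ) : ∀ n, kfractal k n = (List.range (k ^ n)).map (fractal k n)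
  | 0 => rfl
  | n + 1 => by
    have hblock : ∀ i, ∀ j < k ^ n,
        fractal k (n + 1) (j + k ^ n * i) = fractal k n j + fractalBlocks k n i * k ^ n :=
      fun i j hj => by rw [fractal, inflate_add_mul hj, mul_comm]
    rw [kfractal, kfractal_eq_map_range k n, pow_succ', List.map_range_mul]
    simp only [List.length_map, List.length_range, List.map_map]
    split_ifs with hn <;>
      refine List.flatMap_congr fun i _ => List.map_congr_left fun j hj => ?_ <;>
      simp [hblock i j (List.mem_range.1 hj), fractalBlocks, hn]

theorem HasCopyIn.exists_map_range {p q : ℕ → ℕ} {m M : ℕ} {R : Set ℕ}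
    (h : HasCopyIn p m q M R) :
    ∃ s : Fin ((List.range m).map p).length → Fin ((List.range M).map q).length, StrictMono s ∧
      (∀ i j, ((List.range M).map q).get (s i) < ((List.range M).map q).get (s j) ↔
        ((List.range m).map p).get i < ((List.range m).map p).get j) ∧ ∀ i, (s i : ℕ) ∈ R := by
  obtain ⟨s, ⟨hs, hlt⟩, hR⟩ := h
  refine ⟨fun i => Fin.cast (by simp) (s (Fin.cast (by simp) i)), fun i j hij => hs hij,
    fun i j => by simpa using hlt (Fin.cast (by simp) i) (Fin.cast (by simp) j), fun i => hR _⟩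

theorem kfractal_partition_general (a b n : ℕ)
    (c : ℕ → Fin 2) :
    (∃ s : Fin (kfractal a n).length → Fin (kfractal (a + b - 1) n).length,
      StrictMono s ∧
      (∀ i j, (kfractal (a + b - 1) n).get (s i) < (kfractal (a + b - 1) n).get (s j) ↔
        (kfractal a n).get i < (kfractal a n).get j) ∧
      ∀ i, c (s i).val = 0) ∨
    (∃ s : Fin (kfractal b n).length → Fin (kfractal (a + b - 1) n).length,
      StrictMono s ∧
      (∀ i j, (kfractal (a + b - 1) n).get (s i) < (kfractal (a + b - 1) n).get (s j) ↔
        (kfractal b n).get i < (kfractal b n).get j) ∧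
      ∀ i, c (s i).val = 1) := by
  rw [kfractal_eq_map_range a, kfractal_eq_map_range b, kfractal_eq_map_range (a + b - 1)]
  rcases fractal_partition le_rfl n {m | c m = 0} with h | h
  · exact Or.inl h.exists_map_range
  · obtain ⟨s, hs, hlt, hR⟩ := h.exists_map_range
    exact Or.inr ⟨s, hs, hlt, fun i => Fin.eq_one_of_ne_zero _ (hR i)⟩

/-- Partition lemma for fractals: any 2-coloring of the vertices of the `(a+b-1)`-fractal of
dimension `n` admits either a color-0 sub-pattern isomorphic to the `a`-fractal of dimension
`n`, or a color-1 sub-pattern isomorphic to the `b`-fractal of dimension `n`. -/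
theorem kfractal_partition (a b n : ℕ) (ha : 1 ≤ a) (hb : 1 ≤ b)
    (c : ℕ → Fin 2) :
    (∃ s : Fin (kfractal a n).length → Fin (kfractal (a + b - 1) n).length,
      StrictMono s ∧
      (∀ i j, (kfractal (a + b - 1) n).get (s i) < (kfractal (a + b - 1) n).get (s j) ↔
        (kfractal a n).get i < (kfractal a n).get j) ∧
      ∀ i, c (s i).val = 0) ∨
    (∃ s : Fin (kfractal b n).length → Fin (kfractal (a + b - 1) n).length,
      StrictMono s ∧
      (∀ i j, (kfractal (a + b - 1) n).get (s i) < (kfractal (a + b - 1) n).get (s j) ↔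
        (kfractal b n).get i < (kfractal b n).get j) ∧
      ∀ i, c (s i).val = 1) :=
  kfractal_partition_general a b n c
end

section
/- For every k ≥ 2, the family of k-fractals is a basis for the separable permutations: every separable permutation is a sub-pattern of the k-fractal of some dimension n. -/
/-!
Induct on the separable permutation. A direct (skew) sum of two patterns embeds into the direct
(skew) sum of their hosts. Every `k`-fractal contains the previous one, and for `k ≥ 2` its first
two blocks (for even `n`) or last two blocks (for odd `n`) form `F ⊕ F` resp. `F ⊖ F`, where `F`
is the fractal of dimension `n`. So once both summands embed into a common `F` of the right
parity, their sum embeds into the next fractal.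
-/

/-- `t` is a sub-pattern of the permutation (given as the list of its values) `l`. -/
def SubPattern (t l : List ℕ) : Prop :=
  ∃ s : Fin t.length → Fin l.length, StrictMono s ∧
    ∀ a b : Fin t.length, l.get (s a) < l.get (s b) ↔ t.get a < t.get b

/-- Separable permutations: obtained from the trivial one-element permutation by
iterated direct sums and skew sums. -/
inductive SeparablePerm : List ℕ → Prop
  | trivial : SeparablePerm [0]
  | directSum {l₁ l₂ : List ℕ} : SeparablePerm l₁ → SeparablePerm l₂ →
      SeparablePerm (l₁ ++ l₂.map (· + l₁.length))
  | skewSum {l₁ l₂ : List ℕ} : SeparablePerm l₁ → SeparablePerm l₂ →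
      SeparablePerm (l₁.map (· + l₂.length) ++ l₂)

open scoped List

-- Comparisons are read off the pairs of `zip` rather than off indices, so that concatenation
-- splits them into blocks.
def OrderIsomorphic (t s : List ℕ) : Prop :=
  t.length = s.length ∧ ∀ p ∈ t.zip s, ∀ q ∈ t.zip s, p.1 < q.1 ↔ p.2 < q.2

theorem subPattern_iff_exists_sublist {t l : List ℕ} :
    SubPattern t l ↔ ∃ s, s <+ l ∧ OrderIsomorphic t s := by
  constructor
  · rintro ⟨s, hs, hst⟩
    have hlen : (List.ofFn fun i => l.get (s i)).length = t.length := List.length_ofFn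
    refine ⟨List.ofFn fun i => l.get (s i), ?_, hlen.symm, ?_⟩
    · refine List.sublist_iff_exists_fin_orderEmbedding_get_eq.mpr
        ⟨(Fin.castOrderIso hlen).toOrderEmbedding.trans (OrderEmbedding.ofStrictMono s hs),
        List.get_ofFn _⟩
    · simp only [List.mem_iff_getElem, List.getElem_zip, List.getElem_ofFn]
      rintro _ ⟨i, hi, rfl⟩ _ ⟨j, hj, rfl⟩
      simp only [List.length_zip, lt_min_iff] at hi hj
      exact (hst ⟨i, hi.1⟩ ⟨j, hj.1⟩).symm
  · rintro ⟨s, hsl, hlen, hst⟩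
    obtain ⟨f, hf⟩ := List.sublist_iff_exists_fin_orderEmbedding_get_eq.mp hsl
    refine ⟨f ∘ Fin.cast hlen, f.strictMono.comp (Fin.cast_strictMono hlen), fun i j => ?_⟩
    have hmem : ∀ i : Fin t.length, (t.get i, l.get (f (Fin.cast hlen i))) ∈ t.zip s := by
      intro i
      rw [← hf, List.mem_iff_getElem]
      exact ⟨i, by simp [← hlen], by simp⟩
    exact (hst _ (hmem i) _ (hmem j)).symm

theorem List.Sublist.subPattern {l₁ l₂ : List ℕ} (h : l₁ <+ l₂) : SubPattern l₁ l₂ := by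
  obtain ⟨f, hf⟩ := List.sublist_iff_exists_fin_orderEmbedding_get_eq.mp h
  exact ⟨f, f.strictMono, fun i j => by rw [← hf, ← hf]⟩

namespace SubPattern

theorem trans {t l m : List ℕ} (h₁ : SubPattern t l) (h₂ : SubPattern l m) : SubPattern t m := by
  obtain ⟨s₁, hs₁, hst₁⟩ := h₁
  obtain ⟨s₂, hs₂, hst₂⟩ := h₂
  exact ⟨s₂ ∘ s₁, hs₂.comp hs₁, fun i j => (hst₂ _ _).trans (hst₁ _ _)⟩

theorem map {t l : List ℕ} {f g : ℕ → ℕ} (h : SubPattern t l) (hf : StrictMono f)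
    (hg : StrictMono g) : SubPattern (t.map f) (l.map g) := by
  obtain ⟨s, hsl, hlen, hst⟩ := subPattern_iff_exists_sublist.mp h
  refine subPattern_iff_exists_sublist.mpr ⟨s.map g, hsl.map g, by simp [hlen], ?_⟩
  simp only [List.zip_map, List.mem_map, Prod.exists, Prod.map]
  rintro _ ⟨a, b, hab, rfl⟩ _ ⟨c, d, hcd, rfl⟩
  simpa [hf.lt_iff_lt, hg.lt_iff_lt] using hst _ hab _ hcd

theorem append {t₁ t₂ a b : List ℕ} (h₁ : SubPattern t₁ a) (h₂ : SubPattern t₂ b)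
    (hcross : ∀ x ∈ t₁, ∀ y ∈ t₂, ∀ u ∈ a, ∀ v ∈ b, (x < y ↔ u < v) ∧ (y < x ↔ v < u)) :
    SubPattern (t₁ ++ t₂) (a ++ b) := by
  obtain ⟨s₁, hsl₁, hlen₁, hst₁⟩ := subPattern_iff_exists_sublist.mp h₁
  obtain ⟨s₂, hsl₂, hlen₂, hst₂⟩ := subPattern_iff_exists_sublist.mp h₂
  refine subPattern_iff_exists_sublist.mpr ⟨s₁ ++ s₂, hsl₁.append hsl₂, by simp [hlen₁, hlen₂], ?_⟩
  have hcross' : ∀ p ∈ t₁.zip s₁, ∀ q ∈ t₂.zip s₂,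
      (p.1 < q.1 ↔ p.2 < q.2) ∧ (q.1 < p.1 ↔ q.2 < p.2) := by
    rintro ⟨x, u⟩ hp ⟨y, v⟩ hq
    obtain ⟨hx, hu⟩ := List.of_mem_zip hp
    obtain ⟨hy, hv⟩ := List.of_mem_zip hq
    exact hcross x hx y hy u (hsl₁.subset hu) v (hsl₂.subset hv)
  rw [List.zip_append hlen₁]
  intro p hp q hq
  rcases List.mem_append.mp hp with hp | hp <;> rcases List.mem_append.mp hq with hq | hq
  · exact hst₁ p hp q hq
  · exact (hcross' p hp q hq).1
  · exact (hcross' q hq p hp).2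
  · exact hst₂ p hp q hq

end SubPattern

namespace SubPattern

theorem directSum {t₁ t₂ a b : List ℕ} (ht₁ : ∀ x ∈ t₁, x < t₁.length)
    (ha : ∀ u ∈ a, u < a.length) (h₁ : SubPattern t₁ a) (h₂ : SubPattern t₂ b) :
    SubPattern (t₁ ++ t₂.map (· + t₁.length)) (a ++ b.map (· + a.length)) := by
  refine h₁.append (h₂.map add_left_strictMono add_left_strictMono) ?_
  simp only [List.mem_map]
  rintro x hx _ ⟨y, -, rfl⟩ u hu _ ⟨v, -, rfl⟩
  have := ht₁ x hx
  have := ha u hu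
  omega

theorem skewSum {t₁ t₂ a b : List ℕ} (ht₂ : ∀ y ∈ t₂, y < t₂.length)
    (hb : ∀ v ∈ b, v < b.length) (h₁ : SubPattern t₁ a) (h₂ : SubPattern t₂ b) :
    SubPattern (t₁.map (· + t₂.length) ++ t₂) (a.map (· + b.length) ++ b) := by
  refine (h₁.map add_left_strictMono add_left_strictMono).append h₂ ?_
  simp only [List.mem_map]
  rintro _ ⟨x, -, rfl⟩ y hy _ ⟨u, -, rfl⟩ v hv
  have := ht₂ y hy
  have := hb v hv
  omega

end SubPattern

theorem SeparablePerm.lt_length_of_mem {l : List ℕ} (hl : SeparablePerm l) {x : ℕ}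
    (hx : x ∈ l) : x < l.length := by
  induction hl generalizing x with
  | trivial => simp_all
  | directSum _ _ ih₁ ih₂ =>
    simp only [List.mem_append, List.mem_map, List.length_append, List.length_map] at hx ⊢
    rcases hx with hx | ⟨y, hy, rfl⟩
    · have := ih₁ hx; omega
    · have := ih₂ hy; omega
  | skewSum _ _ ih₁ ih₂ =>
    simp only [List.mem_append, List.mem_map, List.length_append, List.length_map] at hx ⊢
    rcases hx with ⟨y, hy, rfl⟩ | hx
    · have := ih₁ hy; omega
    · have := ih₂ hx; omega

theorem List.append_sublist_flatMap_range {α : Type*} {i j k : ℕ} (hij : i < j) (hjk : j < k)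
    (f : ℕ → List α) : f i ++ f j <+ (List.range k).flatMap f := by
  have hpair : [i, j] <+ List.range (j + 1) := by
    rw [List.range_succ]
    exact (List.singleton_sublist.mpr (List.mem_range.mpr hij)).append (.refl _)
  simpa using (hpair.trans (List.range_sublist.mpr hjk)).flatMap f

theorem kfractal_length_succ (k n : ℕ) :
    (kfractal k (n + 1)).length = k * (kfractal k n).length := by
  rw [kfractal]
  split <;> simp [List.length_flatMap]

theorem lt_length_of_mem_kfractal {k n x : ℕ} (hx : x ∈ kfractal k n) :
    x < (kfractal k n).length := by
  induction n generalizing x with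
  | zero => simp_all [kfractal]
  | succ n ih =>
    have hblock : ∀ c < k, ∀ y ∈ kfractal k n,
        y + c * (kfractal k n).length < k * (kfractal k n).length := by
      intro c hc y hy
      have := ih hy
      nlinarith
    rw [kfractal_length_succ]
    rw [kfractal] at hx
    split at hx <;> obtain ⟨i, hi, y, hy, rfl⟩ := by simpa using hx
    · exact hblock i hi y hy
    · exact hblock _ (by omega) y hy

theorem kfractal_directSum_sublist {k n : ℕ} (hk : 2 ≤ k) (hn : Even n) :
    kfractal k n ++ (kfractal k n).map (· + (kfractal k n).length) <+ kfractal k (n + 1) := by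
  rw [kfractal, if_pos (Nat.even_iff.mp hn)]
  simpa using List.append_sublist_flatMap_range zero_lt_one hk
    fun i => (kfractal k n).map (· + i * (kfractal k n).length)

theorem kfractal_skewSum_sublist {k n : ℕ} (hk : 2 ≤ k) (hn : Odd n) :
    (kfractal k n).map (· + (kfractal k n).length) ++ kfractal k n <+ kfractal k (n + 1) := by
  rw [kfractal, if_neg (by simp [Nat.odd_iff.mp hn])]
  have hone : k - 1 - (k - 2) = 1 := by omega
  simpa [hone] using List.append_sublist_flatMap_range (i := k - 2) (j := k - 1) (by omega)
    (by omega) fun i => (kfractal k n).map (· + (k - 1 - i) * (kfractal k n).length)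

theorem kfractal_sublist_succ {k : ℕ} (hk : 2 ≤ k) (n : ℕ) : kfractal k n <+ kfractal k (n + 1) := by
  rcases Nat.even_or_odd n with hn | hn
  · exact (List.sublist_append_left _ _).trans (kfractal_directSum_sublist hk hn)
  · exact (List.sublist_append_right _ _).trans (kfractal_skewSum_sublist hk hn)

theorem kfractal_sublist_of_le {k n m : ℕ} (hk : 2 ≤ k) (hnm : n ≤ m) :
    kfractal k n <+ kfractal k m := by
  induction hnm with
  | refl => exact List.Sublist.refl _
  | step _ ih => exact ih.trans (kfractal_sublist_succ hk _)

/-- For every `k ≥ 2`, the `k`-fractals form a basis for the separable permutations: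
every separable permutation is a sub-pattern of some `k`-fractal. -/
theorem kfractal_basis_for_separable (k : ℕ) (hk : 2 ≤ k) (l : List ℕ)
    (hl : SeparablePerm l) : ∃ n : ℕ, SubPattern l (kfractal k n) := by
  have lift {t : List ℕ} {n m : ℕ} (ht : SubPattern t (kfractal k n)) (hnm : n ≤ m) :
      SubPattern t (kfractal k m) :=
    ht.trans (kfractal_sublist_of_le hk hnm).subPattern
  induction hl with
  | trivial => exact ⟨0, (List.Sublist.refl _).subPattern⟩
  | @directSum l₁ l₂ h₁ _ ih₁ ih₂ =>
    obtain ⟨n₁, hn₁⟩ := ih₁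
    obtain ⟨n₂, hn₂⟩ := ih₂
    have hsum := SubPattern.directSum (fun _ => h₁.lt_length_of_mem)
      (fun _ => lt_length_of_mem_kfractal) (lift hn₁ (m := 2 * (n₁ + n₂)) (by omega))
      (lift hn₂ (m := 2 * (n₁ + n₂)) (by omega))
    exact ⟨2 * (n₁ + n₂) + 1,
      hsum.trans (kfractal_directSum_sublist hk (even_two_mul _)).subPattern⟩
  | @skewSum l₁ l₂ _ h₂ ih₁ ih₂ =>
    obtain ⟨n₁, hn₁⟩ := ih₁
    obtain ⟨n₂, hn₂⟩ := ih₂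
    have hsum := SubPattern.skewSum (fun _ => h₂.lt_length_of_mem)
      (fun _ => lt_length_of_mem_kfractal) (lift hn₁ (m := 2 * (n₁ + n₂) + 1) (by omega))
      (lift hn₂ (m := 2 * (n₁ + n₂) + 1) (by omega))
    exact ⟨2 * (n₁ + n₂) + 1 + 1,
      hsum.trans (kfractal_skewSum_sublist hk (odd_two_mul_add_one _)).subPattern⟩
end

section
/- Fix k, i, n ≥ 1, a coloring f : [ℕ]² → 2, an infinite set X ⊆ ℕ and a color c < 2. Let F ⊆ ℕ be a finite set f-realizing the i-fractal of dimension n, with fractal decomposition F₀ < ... < F_{i−1} into i blocks each f-realizing the i-fractal of dimension n−1. If F is (f,k)-good for color c in X, then at most k−1 of the blocks F₀, ..., F_{i−1} are (f,k)-bad for color c in X. -/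
/-- The finite set `F` `f`-realizes the permutation pattern `t`: listing `F` in increasing
order as `s 0 < s 1 < ...`, the color `f (s a) (s b)` is `0` exactly when `t a < t b`. -/
def RealizesPerm (f : ℕ → ℕ → Fin 2) (t : List ℕ) (F : Finset ℕ) : Prop :=
  ∃ s : Fin t.length → ℕ, StrictMono s ∧ F = Finset.image s Finset.univ ∧
    ∀ a b : Fin t.length, a < b → (f (s a) (s b) = 0 ↔ t.get a < t.get b)

/-- `x` has limit `c` in the infinite set `X`: `f x y = c` for all but finitely many `y ∈ X`. -/
def HasLimit (f : ℕ → ℕ → Fin 2) (x : ℕ) (c : Fin 2) (X : Set ℕ) : Prop :=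
  {y ∈ X | f x y ≠ c}.Finite

/-- A finite set `F` (`f`-realizing some `i`-fractal of dimension `n`) is `(f,k)`-good for
color `c` in `X` if no subset of `F` `f`-realizes the `k`-fractal of dimension `n` with all
its elements having limit `1 - c` in `X`. -/
def FracGood (f : ℕ → ℕ → Fin 2) (k n : ℕ) (c : Fin 2) (X : Set ℕ) (F : Finset ℕ) : Prop :=
  ¬ ∃ G : Finset ℕ, G ⊆ F ∧ RealizesPerm f (kfractal k n) G ∧
      ∀ x ∈ G, HasLimit f x (1 - c) X

theorem List.zip_flatMap {γ α β : Type*} {l : List γ} {g : γ → List α} {h : γ → List β}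
    (hlen : ∀ a ∈ l, (g a).length = (h a).length) :
    (l.flatMap g).zip (l.flatMap h) = l.flatMap fun a => (g a).zip (h a) := by
  induction l with
  | nil => rfl
  | cons a l ih =>
    rw [List.flatMap_cons, List.flatMap_cons, List.flatMap_cons,
      List.zip_append (hlen a List.mem_cons_self),
      ih fun b hb => hlen b (List.mem_cons_of_mem a hb)]

theorem List.forall_mem_zip_fst_iff {α β : Type*} {l : List α} {t : List β}
    (h : l.length ≤ t.length) {P : α → Prop} :
    (∀ p ∈ l.zip t, P p.1) ↔ ∀ x ∈ l, P x := by
  conv_rhs => rw [← List.map_fst_zip h]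
  exact List.forall_mem_map.symm

theorem List.pairwise_finRange_iff {n : ℕ} {R : Fin n → Fin n → Prop} :
    (List.finRange n).Pairwise R ↔ ∀ a b, a < b → R a b := by
  rw [← List.ofFn_id, List.pairwise_ofFn]
  rfl

theorem List.sort_toFinset_of_pairwise_lt {α : Type*} [LinearOrder α] {l : List α}
    (h : l.Pairwise (· < ·)) : l.toFinset.sort = l :=
  (List.toFinset_sort _ h.nodup).2 (h.imp le_of_lt)

theorem Finset.sort_biUnion_of_lt {α : Type*} [LinearOrder α] {n : ℕ} (B : Fin n → Finset α)
    (hB : ∀ j j' : Fin n, j < j' → ∀ x ∈ B j, ∀ y ∈ B j', x < y) :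
    (Finset.univ.biUnion B).sort = (List.finRange n).flatMap fun j => (B j).sort := by
  have hsorted : ((List.finRange n).flatMap fun j => (B j).sort).Pairwise (· < ·) := by
    refine List.pairwise_flatMap.2 ⟨fun j _ => (B j).sortedLT_sort.pairwise, ?_⟩
    exact List.pairwise_finRange_iff.2 fun j j' hj x hx y hy =>
      hB j j' hj x ((B j).mem_sort _ |>.1 hx) y ((B j').mem_sort _ |>.1 hy)
  rw [← List.sort_toFinset_of_pairwise_lt hsorted]
  congr 1
  ext x
  simp

theorem Nat.add_mul_lt_add_mul {a b u v L : ℕ} (ha : a < L) (huv : u < v) :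
    a + u * L < b + v * L := by
  nlinarith [Nat.mul_le_mul_right L huv]

def kfractalBlockRank (k m j : ℕ) : ℕ := if m % 2 = 0 then j else k - 1 - j

theorem kfractal_length (k n : ℕ) : (kfractal k n).length = k ^ n := by
  induction n with
  | zero => rfl
  | succ n ih =>
    rw [kfractal]
    split_ifs <;> simp [List.length_flatMap, ih, pow_succ, mul_comm]

theorem kfractal_succ (k m : ℕ) :
    kfractal k (m + 1) = (List.range k).flatMap fun j =>
      (kfractal k m).map (· + kfractalBlockRank k m j * k ^ m) := by
  rw [kfractal, ← kfractal_length k m]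
  split_ifs with h <;> simp [kfractalBlockRank, h]

theorem kfractalBlockRank_lt {k m j : ℕ} (hj : j < k) : kfractalBlockRank k m j < k := by
  unfold kfractalBlockRank
  split_ifs <;> omega

theorem lt_of_mem_kfractal {k n x : ℕ} (hx : x ∈ kfractal k n) : x < k ^ n := by
  induction n generalizing x with
  | zero => simp_all [kfractal]
  | succ n ih =>
    simp only [kfractal_succ, List.mem_flatMap, List.mem_range, List.mem_map] at hx
    obtain ⟨j, hj, a, ha, rfl⟩ := hx
    simpa [pow_succ, mul_comm] using
      Nat.add_mul_lt_add_mul (b := 0) (ih ha) (kfractalBlockRank_lt (m := n) hj)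

theorem kfractal_cross_lt_iff {k m a b j j' : ℕ} (ha : a ∈ kfractal k m) (hb : b ∈ kfractal k m)
    (hjj' : j < j') (hj' : j' < k) :
    a + kfractalBlockRank k m j * k ^ m < b + kfractalBlockRank k m j' * k ^ m ↔
      m % 2 = 0 := by
  unfold kfractalBlockRank
  split_ifs with hm
  · exact iff_of_true (Nat.add_mul_lt_add_mul (lt_of_mem_kfractal ha) hjj') hm
  · exact iff_of_false (lt_asymm
      (Nat.add_mul_lt_add_mul (lt_of_mem_kfractal hb) (by omega : k - 1 - j' < k - 1 - j))) hm

/-- `p` and `q` are pairs (element, pattern value), with `p` coming first. -/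
def PatternAgree (f : ℕ → ℕ → Fin 2) (p q : ℕ × ℕ) : Prop := f p.1 q.1 = 0 ↔ p.2 < q.2

theorem pairwise_zip_kfractal_succ_iff (f : ℕ → ℕ → Fin 2) {k m : ℕ} (ys : Fin k → List ℕ)
    (hys : ∀ j, (ys j).length = k ^ m) :
    (((List.finRange k).flatMap ys).zip (kfractal k (m + 1))).Pairwise (PatternAgree f) ↔
      (∀ j, ((ys j).zip (kfractal k m)).Pairwise (PatternAgree f)) ∧
        ∀ j j' : Fin k, j < j' → ∀ x ∈ ys j, ∀ y ∈ ys j', (f x y = 0 ↔ m % 2 = 0) := by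
  set shift : Fin k → List ℕ := fun j => (kfractal k m).map (· + kfractalBlockRank k m j * k ^ m)
  have hshift : kfractal k (m + 1) = (List.finRange k).flatMap shift := by
    rw [kfractal_succ, ← List.map_coe_finRange_eq_range, List.flatMap_map]
  have hlen : ∀ j, (ys j).length = (shift j).length := by simp [shift, hys, kfractal_length]
  rw [hshift, List.zip_flatMap fun j _ => hlen j, List.pairwise_flatMap,
    List.pairwise_finRange_iff]
  refine and_congr (forall_congr' fun j => ?_)
    (forall₂_congr fun j j' => forall_congr' fun hjj' => ?_)
  · rw [imp_iff_right (List.mem_finRange j), List.zip_map_right, List.pairwise_map]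
    exact List.Pairwise.iff fun p q => iff_congr Iff.rfl Nat.add_lt_add_iff_right
  · have hcross : ∀ p ∈ (ys j).zip (shift j), ∀ q ∈ (ys j').zip (shift j'),
        PatternAgree f p q ↔ (f p.1 q.1 = 0 ↔ m % 2 = 0) := by
      rintro ⟨x, _⟩ hp ⟨y, _⟩ hq
      obtain ⟨a, ha, rfl⟩ := List.mem_map.1 (List.of_mem_zip hp).2
      obtain ⟨b, hb, rfl⟩ := List.mem_map.1 (List.of_mem_zip hq).2
      exact iff_congr Iff.rfl (kfractal_cross_lt_iff ha hb hjj' j'.2)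
    rw [forall₂_congr fun p hp => forall₂_congr fun q hq => hcross p hp q hq]
    exact (List.forall_mem_zip_fst_iff (hlen j).le
      (P := fun x => ∀ q ∈ (ys j').zip (shift j'), f x q.1 = 0 ↔ m % 2 = 0)).trans
      (forall₂_congr fun x _ => List.forall_mem_zip_fst_iff (hlen j').le
        (P := fun y => f x y = 0 ↔ m % 2 = 0))

theorem pairwise_zip_sort_iff (f : ℕ → ℕ → Fin 2) {t : List ℕ} {F : Finset ℕ}
    (hc : F.card = t.length) :
    (F.sort.zip t).Pairwise (PatternAgree f) ↔ ∀ a b : Fin t.length, a < b →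
      (f (F.orderEmbOfFin hc a) (F.orderEmbOfFin hc b) = 0 ↔ t.get a < t.get b) := by
  have hlen : F.sort.length = t.length := by rw [Finset.length_sort, hc]
  rw [List.pairwise_iff_getElem]
  simp only [List.length_zip, hlen, min_self, List.getElem_zip, Finset.orderEmbOfFin_apply,
    List.get_eq_getElem, PatternAgree]
  exact ⟨fun h a b hab => h a b a.2 b.2 hab, fun h a b ha hb hab => h ⟨a, ha⟩ ⟨b, hb⟩ hab⟩

theorem realizesPerm_iff {f : ℕ → ℕ → Fin 2} {t : List ℕ} {F : Finset ℕ} :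
    RealizesPerm f t F ↔ F.card = t.length ∧ (F.sort.zip t).Pairwise (PatternAgree f) := by
  constructor
  · rintro ⟨s, hs, rfl, hpat⟩
    have hc : (Finset.univ.image s).card = t.length := by
      rw [Finset.card_image_of_injective _ hs.injective, Finset.card_univ, Fintype.card_fin]
    have hs_eq : s = (Finset.univ.image s).orderEmbOfFin hc :=
      Finset.orderEmbOfFin_unique hc (fun a => Finset.mem_image_of_mem s (Finset.mem_univ a)) hs
    exact ⟨hc, (pairwise_zip_sort_iff f hc).2 (hs_eq ▸ hpat)⟩
  · rintro ⟨hc, hpw⟩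
    exact ⟨F.orderEmbOfFin hc, (F.orderEmbOfFin hc).strictMono,
      (F.image_orderEmbOfFin_univ hc).symm, (pairwise_zip_sort_iff f hc).1 hpw⟩

theorem RealizesPerm.card_eq {f : ℕ → ℕ → Fin 2} {t : List ℕ} {F : Finset ℕ}
    (h : RealizesPerm f t F) : F.card = t.length :=
  (realizesPerm_iff.1 h).1

theorem realizesPerm_kfractal_succ_biUnion_iff (f : ℕ → ℕ → Fin 2) {k m : ℕ}
    (B : Fin k → Finset ℕ) (hB : ∀ j, (B j).card = k ^ m)
    (hBord : ∀ j j' : Fin k, j < j' → ∀ x ∈ B j, ∀ y ∈ B j', x < y) :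
    RealizesPerm f (kfractal k (m + 1)) (Finset.univ.biUnion B) ↔
      (∀ j, RealizesPerm f (kfractal k m) (B j)) ∧
        ∀ j j' : Fin k, j < j' → ∀ x ∈ B j, ∀ y ∈ B j', (f x y = 0 ↔ m % 2 = 0) := by
  have hcard : (Finset.univ.biUnion B).card = (kfractal k (m + 1)).length := by
    rw [← Finset.length_sort (· ≤ ·), Finset.sort_biUnion_of_lt B hBord, List.length_flatMap]
    simp [hB, kfractal_length, pow_succ, mul_comm]
  simp only [realizesPerm_iff, hcard, hB, kfractal_length, true_and,
    Finset.sort_biUnion_of_lt B hBord]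
  refine (pairwise_zip_kfractal_succ_iff f (m := m) (fun j => (B j).sort) (by simp [hB])).trans
    (and_congr Iff.rfl ?_)
  simp

theorem Set.Finite.exists_orderEmbedding_fin_of_le_ncard {α : Type*} [LinearOrder α] {s : Set α}
    (hs : s.Finite) {k : ℕ} (hk : k ≤ s.ncard) : ∃ e : Fin k ↪o α, ∀ t, e t ∈ s := by
  rw [Set.ncard_eq_toFinset_card s hs] at hk
  obtain ⟨T, hT, hTcard⟩ := Finset.exists_subset_card_eq hk
  exact ⟨T.orderEmbOfFin hTcard, fun t => hs.mem_toFinset.1 (hT (T.orderEmbOfFin_mem hTcard t))⟩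

theorem good_fractal_few_bad_blocks_general (k i n : ℕ) (hn : 1 ≤ n)
    (f : ℕ → ℕ → Fin 2) (X : Set ℕ) (c : Fin 2)
    (F : Finset ℕ) (hF : RealizesPerm f (kfractal i n) F)
    (B : Fin i → Finset ℕ)
    (hBreal : ∀ j, RealizesPerm f (kfractal i (n - 1)) (B j))
    (hBord : ∀ j j' : Fin i, j < j' → ∀ x ∈ B j, ∀ y ∈ B j', x < y)
    (hBunion : F = Finset.univ.biUnion B)
    (hgood : FracGood f k n c X F) :
    {j : Fin i | ¬ FracGood f k (n - 1) c X (B j)}.ncard ≤ k - 1 := by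
  obtain ⟨m, rfl⟩ : ∃ m, n = m + 1 := ⟨n - 1, by omega⟩
  rw [Nat.add_sub_cancel] at hBreal ⊢
  have hBcard j : (B j).card = i ^ m := (kfractal_length i m) ▸ (hBreal j).card_eq
  have hBcross := ((realizesPerm_kfractal_succ_biUnion_iff f B hBcard hBord).1 (hBunion ▸ hF)).2
  by_contra! hbad
  obtain ⟨e, he⟩ := Set.Finite.exists_orderEmbedding_fin_of_le_ncard
    (Set.toFinite {j | ¬ FracGood f k m c X (B j)}) (k := k) (by omega)
  choose G hGB hG hGlim using fun t => not_not.1 (he t)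
  have hGord t t' (htt' : t < t') x (hx : x ∈ G t) y (hy : y ∈ G t') :=
    hBord _ _ (e.strictMono htt') x (hGB t hx) y (hGB t' hy)
  refine hgood ⟨Finset.univ.biUnion G, ?_, ?_, ?_⟩
  · exact hBunion ▸ Finset.biUnion_subset.2 fun t _ =>
      (hGB t).trans (Finset.subset_biUnion_of_mem B (Finset.mem_univ _))
  · refine (realizesPerm_kfractal_succ_biUnion_iff f G ?_ hGord).2 ⟨hG, ?_⟩
    · exact fun t => (kfractal_length k m) ▸ (hG t).card_eq
    · exact fun t t' htt' x hx y hy => hBcross _ _ (e.strictMono htt') x (hGB t hx) y (hGB t' hy)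
  · intro x hx
    obtain ⟨t, -, hxt⟩ := Finset.mem_biUnion.1 hx
    exact hGlim t x hxt

/-- If `F` realizes the `i`-fractal of dimension `n` with fractal decomposition
`B 0 < ... < B (i-1)` and `F` is `(f,k)`-good for color `c` in `X`, then at most `k - 1`
of the blocks are `(f,k)`-bad for color `c` in `X`. -/
theorem good_fractal_few_bad_blocks (k i n : ℕ) (hk : 1 ≤ k) (hi : 1 ≤ i) (hn : 1 ≤ n)
    (f : ℕ → ℕ → Fin 2) (X : Set ℕ) (hX : X.Infinite) (c : Fin 2)
    (F : Finset ℕ) (hF : RealizesPerm f (kfractal i n) F)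
    (B : Fin i → Finset ℕ)
    (hBreal : ∀ j, RealizesPerm f (kfractal i (n - 1)) (B j))
    (hBord : ∀ j j' : Fin i, j < j' → ∀ x ∈ B j, ∀ y ∈ B j', x < y)
    (hBunion : F = Finset.univ.biUnion B)
    (hgood : FracGood f k n c X F) :
    {j : Fin i | ¬ FracGood f k (n - 1) c X (B j)}.ncard ≤ k - 1 :=
  good_fractal_few_bad_blocks_general k i n hn f X c F hF B hBreal hBord hBunion hgood
end

section
/- Let f : [ℕ]² → 2 be a computable coloring and k ∈ ℕ such that no set of k elements is f-homogeneous for the color 0. Then there exists an infinite computable set that is f-homogeneous for the color 1. -/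
/-!
Induct on `k`, working inside an infinite computable set `S` rather than all of `ℕ`. If some
`a ∈ S` has infinitely many `y > a` in `S` with `f a y = 0`, those `y` form an infinite computable
set without `0`-homogeneous sets of size `k - 1` (adding `a` to one would give size `k` in `S`),
so induction applies. Otherwise every element of `S` has only finitely many `0`-coloured
successors in `S`, and the greedy set (`n ∈ S` is kept iff `f m n = 1` for every kept `m < n`)
is computable, `1`-homogeneous, and infinite: if it were finite, all but finitely many elements
of `S` would have been kept.
-/

open Set

namespace ComputablePred

variable {α β : Type*} [Primcodable α] [Primcodable β]

theorem comp {p : β → Prop} (hp : ComputablePred p) {g : α → β} (hg : Computable g) :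
    ComputablePred fun a => p (g a) := by
  obtain ⟨_, hp⟩ := hp
  exact (hp.comp hg).computablePred

theorem eq {f g : α → β} (hf : Computable f) (hg : Computable g) :
    ComputablePred fun a => f a = g a :=
  Primrec.eq.computablePred.comp (hf.pair hg)

theorem and {p q : α → Prop} (hp : ComputablePred p) (hq : ComputablePred q) :
    ComputablePred fun a => p a ∧ q a := by
  obtain ⟨_, hp⟩ := hp
  obtain ⟨_, hq⟩ := hq
  exact ((Primrec.and.to_comp.comp hp hq).of_eq fun a => by simp).computablePred

theorem imp {p q : α → Prop} (hp : ComputablePred p) (hq : ComputablePred q) :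
    ComputablePred fun a => p a → q a := by
  obtain ⟨_, hp⟩ := hp
  obtain ⟨_, hq⟩ := hq
  exact ((Primrec.or.to_comp.comp (Primrec.not.to_comp.comp hp) hq).of_eq fun a => by
    by_cases p a <;> simp [*]).computablePred

theorem forall_lt {p : α → ℕ → Prop} (hp : ComputablePred fun x : α × ℕ => p x.1 x.2)
    {b : α → ℕ} (hb : Computable b) : ComputablePred fun a => ∀ m < b a, p a m := by
  classical
  have hrec : Computable fun a =>
      Nat.rec (motive := fun _ => Bool) true (fun m IH => IH && decide (p a m)) (b a) :=
    Computable.nat_rec hb (Computable.const true) <| Primrec.and.to_comp.comp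
      (Computable.snd.comp Computable.snd)
      (hp.decide.comp (Computable.fst.pair (Computable.fst.comp Computable.snd))) |>.to₂
  refine (hrec.of_eq fun a => ?_).computablePred
  induction b a with
  | zero => simp
  | succ n ih => simp only [ih, Nat.forall_lt_succ_right, Bool.decide_and]

end ComputablePred

section Homogeneous

variable {α κ : Type*}

def IsHomogeneous [LT α] (f : α → α → κ) (c : κ) (H : Set α) : Prop :=
  ∀ x ∈ H, ∀ y ∈ H, x < y → f x y = c

theorem IsHomogeneous.insert [Preorder α] {f : α → α → κ} {c : κ} {H : Set α} {a : α}
    (hH : IsHomogeneous f c H) (ha : ∀ y ∈ H, a < y ∧ f a y = c) :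
    IsHomogeneous f c (insert a H) := by
  rintro x (rfl | hx) y (rfl | hy) hxy
  · exact absurd hxy (lt_irrefl _)
  · exact (ha y hy).2
  · exact absurd ((ha _ hx).1.trans hxy) (lt_irrefl _)
  · exact hH x hx y hy hxy

def HomogeneousFree [LT α] (f : α → α → κ) (c : κ) (k : ℕ) (S : Set α) : Prop :=
  ∀ F : Finset α, ↑F ⊆ S → F.card = k → ¬ IsHomogeneous f c (F : Set α)

def upperNbhd [LT α] (f : α → α → κ) (c : κ) (S : Set α) (a : α) : Set α :=
  {y ∈ S | a < y ∧ f a y = c}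

theorem HomogeneousFree.upperNbhd [Preorder α] [DecidableEq α] {f : α → α → κ} {c : κ} {k : ℕ}
    {S : Set α} {a : α} (hS : HomogeneousFree f c (k + 1) S) (ha : a ∈ S) :
    HomogeneousFree f c k (upperNbhd f c S a) := by
  intro F hF hcard hhom
  have haF : a ∉ F := fun haF => lt_irrefl a (hF haF).2.1
  refine hS (insert a F) ?_ (by rw [Finset.card_insert_of_notMem haF, hcard]) ?_
  · rw [Finset.coe_insert]
    exact insert_subset ha (hF.trans (sep_subset _ _))
  · rw [Finset.coe_insert]
    exact hhom.insert fun y hy => (hF hy).2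

end Homogeneous

section

variable {κ : Type*} {f : ℕ → ℕ → κ} {c : κ} {S : Set ℕ}

theorem computablePred_mem_upperNbhd [Primcodable κ] (hf : Computable₂ f)
    (hS : ComputablePred (· ∈ S)) (a : ℕ) : ComputablePred (· ∈ upperNbhd f c S a) :=
  hS.and <| (PrimrecPred.computablePred (Primrec.nat_lt.comp (Primrec.const a) Primrec.id)).and
    (ComputablePred.eq (hf.comp (Computable.const a) Computable.id) (Computable.const c))

section Greedy

variable [DecidableEq κ] [DecidablePred (· ∈ S)]

variable (f c S) in
-- Quantifying over `Fin n` makes the recursive call visibly decreasing.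
def greedy (n : ℕ) : Bool :=
  decide (n ∈ S ∧ ∀ m : Fin n, greedy m = true → f m n = c)

theorem greedy_eq_true_iff {n : ℕ} :
    greedy f c S n = true ↔ n ∈ S ∧ ∀ m < n, greedy f c S m = true → f m n = c := by
  rw [greedy, decide_eq_true_iff, Fin.forall_iff]

theorem isHomogeneous_greedy : IsHomogeneous f c {n | greedy f c S n = true} :=
  fun _ hx _ hy hxy => (greedy_eq_true_iff.1 hy).2 _ hxy hx

theorem infinite_setOf_greedy (hS : S.Infinite)
    (hfin : ∀ a ∈ S, {y ∈ S | a < y ∧ f a y ≠ c}.Finite) :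
    {n | greedy f c S n = true}.Infinite := by
  intro hH
  have hbad : (⋃ a ∈ {n | greedy f c S n = true}, {y ∈ S | a < y ∧ f a y ≠ c}).Finite :=
    hH.biUnion fun a ha => hfin a (greedy_eq_true_iff.1 ha).1
  refine (hS.sdiff hbad).mono ?_ hH
  rintro z ⟨hzS, hz⟩
  refine greedy_eq_true_iff.2 ⟨hzS, fun m hm hgm => ?_⟩
  by_contra hne
  exact hz (mem_biUnion hgm ⟨hzS, hm, hne⟩)

theorem computable_greedy [Primcodable κ] (hf : Computable₂ f) (hS : ComputablePred (· ∈ S)) :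
    Computable (greedy f c S) := by
  -- `nat_strong_rec` feeds the step the list `[greedy 0, …, greedy (n - 1)]` of earlier values.
  have hstep : ComputablePred fun l : List Bool =>
      l.length ∈ S ∧ ∀ m < l.length, l.getD m false = true → f m l.length = c :=
    (hS.comp Computable.list_length).and <| ComputablePred.forall_lt
      (ComputablePred.imp
        (ComputablePred.eq ((Primrec.list_getD false).to_comp.comp Computable.fst Computable.snd)
          (Computable.const true))
        (ComputablePred.eq (hf.comp Computable.snd (Computable.list_length.comp Computable.fst))
          (Computable.const c)))
      Computable.list_length
  refine (Computable.nat_strong_rec (fun (_ : Unit) => greedy f c S)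
    (Computable.option_some.comp (hstep.decide.comp Computable.snd)).to₂ fun _ n => ?_).comp
    (Computable.const ()) Computable.id
  rw [Option.some_inj, Bool.eq_iff_iff, decide_eq_true_iff, greedy_eq_true_iff]
  simp only [List.length_map, List.length_range]
  refine and_congr_right fun _ => forall₂_congr fun m hm => ?_
  rw [List.getD_eq_getElem?_getD, List.getElem?_map, List.getElem?_range hm]
  rfl

end Greedy

end

theorem exists_infinite_computablePred_isHomogeneous_one {f : ℕ → ℕ → Fin 2} (hf : Computable₂ f)
    (k : ℕ) {S : Set ℕ} (hS : ComputablePred (· ∈ S)) (hSinf : S.Infinite)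
    (hno : HomogeneousFree f 0 k S) :
    ∃ H : Set ℕ, H.Infinite ∧ ComputablePred (· ∈ H) ∧ IsHomogeneous f 1 H := by
  induction k generalizing S with
  | zero => exact absurd (by simp [IsHomogeneous]) (hno ∅ (by simp) rfl)
  | succ k ih =>
    by_cases hnbhd : ∃ a ∈ S, (upperNbhd f 0 S a).Infinite
    · obtain ⟨a, haS, hinf⟩ := hnbhd
      exact ih (computablePred_mem_upperNbhd hf hS a) hinf (hno.upperNbhd haS)
    · push Not at hnbhd
      classical
      refine ⟨_, infinite_setOf_greedy hSinf fun a ha => ?_,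
        ComputablePred.computable_iff.2 ⟨_, computable_greedy hf hS, rfl⟩, isHomogeneous_greedy⟩
      exact (hnbhd a ha).subset fun y ⟨hyS, hay, hne⟩ => ⟨hyS, hay, by omega⟩

/-- If `f` is a computable 2-coloring of pairs and no set of `k` elements is
`f`-homogeneous for color 0, then there is an infinite computable set that is
`f`-homogeneous for color 1. -/
theorem unbalanced_ramsey (f : ℕ → ℕ → Fin 2) (hf : Computable₂ f) (k : ℕ)
    (hno : ∀ F : Finset ℕ, F.card = k → ¬ ∀ x ∈ F, ∀ y ∈ F, x < y → f x y = 0) :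
    ∃ H : Set ℕ, H.Infinite ∧ ComputablePred (· ∈ H) ∧
      ∀ x ∈ H, ∀ y ∈ H, x < y → f x y = 1 :=
  exists_infinite_computablePred_isHomogeneous_one hf k
    (ComputablePred.computable_iff.2 ⟨fun _ => true, Computable.const true, by simp⟩)
    infinite_univ fun F _ => hno F
end

section
/- Let L = (ℕ, <_L) be a computable linear order of order type ω + ω*, with no computable infinite L-ascending sequence and no computable infinite L-descending sequence. Then both the ω-part A(L) = { x : x <_L y for all but finitely many y } and its complement are hyperimmune. -/
/-- `r` (as a boolean relation) is a strict linear order on ℕ. -/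
def IsLinearRel (r : ℕ → ℕ → Bool) : Prop :=
  (∀ x, r x x = false) ∧
  (∀ x y z, r x y = true → r y z = true → r x z = true) ∧
  (∀ x y, x ≠ y → r x y = true ∨ r y x = true)

/-- The order has type `ω + ω*`: each element has finitely many predecessors or finitely
many successors, and both parts are infinite. -/
def OrderTypeOmegaPlusOmegaStar (r : ℕ → ℕ → Bool) : Prop :=
  (∀ x, {y | r y x = true}.Finite ∨ {y | r x y = true}.Finite) ∧
  {x | {y | r y x = true}.Finite}.Infinite ∧
  {x | {y | r x y = true}.Finite}.Infinite

/-- An infinite set is hyperimmune if its principal function is not dominated by any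
computable function. -/
def Hyperimmune (A : Set ℕ) : Prop :=
  A.Infinite ∧ ∀ f : ℕ → ℕ, Computable f → ¬ ∀ n, Nat.nth (· ∈ A) n ≤ f n

/-!
Suppose a computable `f` dominates the principal function of the `ω`-part `A`. Then the first
`n + 1` elements of `A` lie in `[0, f n]`, so the element `g n` having exactly `n` order
predecessors in `[0, f n]` cannot lie above all of `A`, i.e. `g n ∈ A`. The map `g` is
computable, and since `g n` has at least `n` predecessors, the `g n` are cofinal in `A`;
searching for an `L`-larger value of `g` step by step yields a computable ascending sequence.
The complement of `A` is the `ω`-part of the reversed order, which turns descending sequences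
into ascending ones.
-/

section Computability

variable {α : Type*} [Primcodable α]

theorem exists_computable_choice {q : α → ℕ → Bool} (hq : Computable₂ q)
    (H : ∀ a, ∃ x, q a x = true) :
    ∃ F : α → ℕ, Computable F ∧ ∀ a, q a (F a) = true := by
  classical
  refine ⟨fun a => Nat.find (H a), (Partrec.rfind hq.partrec₂).of_eq_tot fun a => ?_,
    fun a => Nat.find_spec (H a)⟩
  exact Nat.mem_rfind.2 ⟨Part.mem_some_iff.2 (Nat.find_spec (H a)).symm,
    fun hm => Part.mem_some_iff.2 (by simpa using Nat.find_min (H a) hm)⟩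

theorem Computable₂.nat_count {p : α → ℕ → Bool} (hp : Computable₂ p) :
    Computable₂ fun a n => Nat.count (fun k => p a k = true) n := by
  have hstep : Computable₂ fun (x : α × ℕ) (y : ℕ × ℕ) => y.2 + cond (p x.1 y.1) 1 0 :=
    (Primrec.nat_add.to_comp.comp (Computable.snd.comp .snd) <|
      .cond (hp.comp (Computable.fst.comp .fst) (Computable.fst.comp .snd)) (.const 1)
        (.const 0)).to₂
  refine (Computable.nat_rec .snd (.const 0) hstep).of_eq fun ⟨a, n⟩ => ?_
  induction n with
  | zero => rfl
  | succ n ih => cases h : p a n <;> simp_all [Nat.count_succ]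

end Computability

theorem exists_computable_chain {q : ℕ → ℕ → Bool} (hq : Computable₂ q)
    (H : ∀ x, ∃ y, q x y = true) :
    ∃ s : ℕ → ℕ, Computable s ∧ ∀ n, q (s n) (s (n + 1)) = true := by
  obtain ⟨F, hF, hFq⟩ := exists_computable_choice hq H
  refine ⟨fun n => F^[n] 0, ?_, fun n => by
    simpa only [Function.iterate_succ_apply'] using hFq _⟩
  refine (Computable.nat_rec .id (.const 0) (hF.comp (Computable.snd.comp .snd)).to₂).of_eq
    fun n => ?_
  induction n with
  | zero => rfl
  | succ n ih => simp_all [Function.iterate_succ_apply']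

open Finset in
theorem Finset.exists_card_filter_rel_eq {α : Type*} (r : α → α → Prop)
    [IsStrictTotalOrder α r] [DecidableRel r] (s : Finset α) {n : ℕ} (hn : n < #s) :
    ∃ x ∈ s, #{y ∈ s | r y x} = n := by
  set ρ : α → ℕ := fun x => #{y ∈ s | r y x}
  have hmaps : Set.MapsTo ρ s (range #s) := fun x hx => mem_range.2 <|
    card_lt_card <| filter_ssubset.2 ⟨x, hx, irrefl x⟩
  have hmono : ∀ x ∈ s, ∀ y, r x y → ρ x < ρ y := fun x hx y hxy => card_lt_card <|
    (ssubset_iff_of_subset (monotone_filter_right s fun _ _ hz => _root_.trans hz hxy)).2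
      ⟨x, mem_filter.2 ⟨hx, hxy⟩, fun h => irrefl x (mem_filter.1 h).2⟩
  have hinj : Set.InjOn ρ s := fun x hx y hy hxy => by
    rcases trichotomous_of r x y with h | h | h
    · exact absurd hxy (hmono x hx y h).ne
    · exact h
    · exact absurd hxy (hmono y hy x h).ne'
  obtain ⟨x, hx, hxn⟩ := surjOn_of_injOn_of_card_le ρ hmaps hinj (by simp) (mem_range.2 hn)
  exact ⟨x, hx, hxn⟩

def omegaPart (r : ℕ → ℕ → Bool) : Set ℕ := {x | {y | r y x = true}.Finite}

namespace IsLinearRel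

variable {r : ℕ → ℕ → Bool}

theorem isStrictTotalOrder (h : IsLinearRel r) :
    IsStrictTotalOrder ℕ (fun x y => r x y = true) where
  irrefl x := by simp [h.1 x]
  trans := h.2.1
  trichotomous x y hxy hyx := by_contra fun hne => (h.2.2 x y hne).elim hxy hyx

theorem swap (h : IsLinearRel r) : IsLinearRel fun x y => r y x :=
  ⟨h.1, fun x y z hxy hyz => h.2.1 z y x hyz hxy, fun x y hxy => (h.2.2 x y hxy).symm⟩

theorem not_finite_succ_of_finite_pred (h : IsLinearRel r) {x : ℕ}
    (hpred : {y | r y x = true}.Finite) : ¬{y | r x y = true}.Finite := fun hsucc =>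
  Set.infinite_univ <| ((hpred.union hsucc).insert x).subset fun y _ => by
    rcases eq_or_ne y x with rfl | hne
    · exact Or.inl rfl
    · exact Or.inr (h.2.2 y x hne)

theorem compl_omegaPart (h : IsLinearRel r)
    (htype : ∀ x, {y | r y x = true}.Finite ∨ {y | r x y = true}.Finite) :
    (omegaPart r)ᶜ = omegaPart fun x y => r y x := by
  ext x
  exact ⟨(htype x).resolve_left,
    fun hsucc hpred => h.not_finite_succ_of_finite_pred hpred hsucc⟩

theorem rel_of_mem_of_notMem_omegaPart (h : IsLinearRel r) {a b : ℕ} (ha : a ∈ omegaPart r)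
    (hb : b ∉ omegaPart r) : r a b = true := by
  rcases eq_or_ne a b with rfl | hne
  · exact absurd ha hb
  · exact (h.2.2 a b hne).resolve_right fun hba => hb (ha.subset fun y hy => h.2.1 y b a hy hba)

theorem exists_count_eq (h : IsLinearRel r) {m n : ℕ} (hn : n < m) :
    ∃ x, Nat.count (fun y => r y x = true) m = n := by
  have := h.isStrictTotalOrder
  obtain ⟨x, -, hxn⟩ :=
    (Finset.range m).exists_card_filter_rel_eq (fun x y => r x y = true) (by simpa using hn)
  exact ⟨x, by rwa [Nat.count_eq_card_filter_range]⟩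

theorem rel_of_card_lt_count (h : IsLinearRel r) {x y m : ℕ} (hx : {z | r z x = true}.Finite)
    (hlt : hx.toFinset.card < Nat.count (fun z => r z y = true) m) : r x y = true := by
  by_contra hxy
  have hsub : ∀ z, r z y = true → r z x = true := fun z hz => by
    rcases eq_or_ne y x with rfl | hne
    · exact hz
    · exact h.2.1 z y x hz ((h.2.2 x y hne.symm).resolve_left hxy)
  exact hlt.not_ge <| (Nat.count_mono_left fun z _ => hsub z).trans (Nat.count_le_card hx m)

theorem succ_le_count_of_notMem_omegaPart [DecidablePred (· ∈ omegaPart r)]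
    (h : IsLinearRel r) (hinf : (omegaPart r).Infinite) {x : ℕ} (hx : x ∉ omegaPart r)
    (n : ℕ) :
    n + 1 ≤ Nat.count (fun y => r y x = true) (Nat.nth (· ∈ omegaPart r) n + 1) :=
  calc n + 1 = Nat.count (· ∈ omegaPart r) (Nat.nth (· ∈ omegaPart r) n + 1) :=
        (Nat.count_nth_succ_of_infinite (p := (· ∈ omegaPart r)) hinf n).symm
    _ ≤ _ := Nat.count_mono_left fun _ _ hy => h.rel_of_mem_of_notMem_omegaPart hy hx

end IsLinearRel

theorem hyperimmune_omegaPart {r : ℕ → ℕ → Bool} (hcomp : Computable₂ r)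
    (hlin : IsLinearRel r) (hinf : (omegaPart r).Infinite)
    (hnoasc : ¬ ∃ g : ℕ → ℕ, Computable g ∧ ∀ n, r (g n) (g (n + 1)) = true) :
    Hyperimmune (omegaPart r) := by
  classical
  refine ⟨hinf, fun f hf hdom => hnoasc ?_⟩
  have hrank : Computable₂ fun n x => decide (Nat.count (fun y => r y x = true) (f n + 1) = n) :=
    Primrec.eq.decide.to_comp.comp
      ((Computable₂.nat_count (p := fun x y => r y x) (hcomp.comp .snd .fst)).comp .snd
        (Computable.succ.comp (hf.comp .fst))) .fst
  obtain ⟨g, hg, hgrank⟩ := exists_computable_choice hrank fun n => by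
    simpa using hlin.exists_count_eq
      (Nat.lt_succ_of_le (((Nat.nth_strictMono hinf).id_le n).trans (hdom n)))
  simp only [decide_eq_true_eq] at hgrank
  have hgA : ∀ n, g n ∈ omegaPart r := fun n => by
    by_contra hx
    have := (hlin.succ_le_count_of_notMem_omegaPart hinf hx n).trans
      (Nat.count_monotone _ (Nat.add_le_add_right (hdom n) 1))
    rw [hgrank] at this
    exact n.not_succ_le_self this
  have hcofinal : ∀ m, ∃ k, r (g m) (g k) = true := fun m =>
    ⟨(hgA m).toFinset.card + 1, hlin.rel_of_card_lt_count (hgA m) (by rw [hgrank]; omega)⟩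
  obtain ⟨s, hs, hchain⟩ := exists_computable_chain (q := fun m k => r (g m) (g k))
    (hcomp.comp (hg.comp .fst) (hg.comp .snd)) hcofinal
  exact ⟨g ∘ s, hg.comp hs, hchain⟩

/-- For a computable linear order of type `ω + ω*` with no computable infinite ascending
or descending sequence, the `ω`-part and its complement are both hyperimmune. -/
theorem omega_part_bihyperimmune (r : ℕ → ℕ → Bool) (hcomp : Computable₂ r)
    (hlin : IsLinearRel r) (htype : OrderTypeOmegaPlusOmegaStar r)
    (hnoasc : ¬ ∃ g : ℕ → ℕ, Computable g ∧ ∀ n, r (g n) (g (n + 1)) = true)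
    (hnodesc : ¬ ∃ g : ℕ → ℕ, Computable g ∧ ∀ n, r (g (n + 1)) (g n) = true) :
    Hyperimmune {x | {y | r y x = true}.Finite} ∧
    Hyperimmune {x | {y | r y x = true}.Finite}ᶜ := by
  refine ⟨hyperimmune_omegaPart hcomp hlin htype.2.1 hnoasc, ?_⟩
  show Hyperimmune (omegaPart r)ᶜ
  rw [hlin.compl_omegaPart htype.1]
  exact hyperimmune_omegaPart (hcomp.comp .snd .fst) hlin.swap htype.2.2 hnodesc
end
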